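/- arXiv:2312.13899 — 2 statements merged into one kernel-verified Lean document; each statement's English description precedes it below -/
import Mathlib

section
/- For the real function g(x) = x(1+x²)(1+x^{2/α}) / (x^{1/α}·((1+x²)² − 4x²cos²(απ/2))) defined on (0,∞) with parameter α ∈ (0,1], the function attains its global minimum at x = 1, and that minimum value equals 1/sin²(απ/2). -/
/-!
Put `x = exp t` and `s = sin (α π / 2)`. Then `g x = cosh t cosh (t / α) / (sinh² t + s²)`, so the
claim `g x ≥ g 1 = 1 / s²` is `sinh² t ≤ s² (cosh t cosh (β t) - 1)` with `β = 1 / α`.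
Writing `cosh t cosh (β t)` as the mean of `cosh ((β + 1) t)` and `cosh ((β - 1) t)` and comparing power
series term by term, this reduces to two scalar inequalities: `s² ((β + 1) / 2)⁴ ≥ 1`, from Jordan's
inequality `s ≥ α`, and `s² (β² + 1) ≥ 2`, the case `t → 0`, from the concavity of `sin` for `α ≤ 1 / 2`
and from `cos z ≥ 1 - z² / 2` at `z = (1 - α) π / 2` otherwise.
-/

open Real
open scoped Nat

theorem hasSum_cosh_sub_one_sub_sq_div_two (u : ℝ) :
    HasSum (fun n ↦ u ^ (2 * (n + 2)) / ↑(2 * (n + 2))!) (cosh u - 1 - u ^ 2 / 2) := by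
  simpa [Finset.sum_range_succ, sub_sub] using (hasSum_nat_add_iff' 2).mpr u.hasSum_cosh

theorem cosh_sub_one_sub_sq_div_two_nonneg (u : ℝ) : 0 ≤ cosh u - 1 - u ^ 2 / 2 :=
  (hasSum_cosh_sub_one_sub_sq_div_two u).nonneg fun n ↦ by rw [pow_mul]; positivity

theorem pow_four_mul_cosh_sub_one_sub_sq_div_two_le {μ : ℝ} (hμ : 1 ≤ |μ|) (u : ℝ) :
    μ ^ 4 * (cosh u - 1 - u ^ 2 / 2) ≤ cosh (μ * u) - 1 - (μ * u) ^ 2 / 2 := by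
  refine hasSum_le (fun n ↦ ?_) ((hasSum_cosh_sub_one_sub_sq_div_two u).mul_left (μ ^ 4))
    (hasSum_cosh_sub_one_sub_sq_div_two (μ * u))
  have hμn : μ ^ 4 ≤ μ ^ (2 * (n + 2)) := by
    rw [pow_mul, show μ ^ 4 = (μ ^ 2) ^ 2 by ring]
    exact pow_le_pow_right₀ (one_le_sq_iff_one_le_abs μ |>.mpr hμ) (by omega)
  rw [mul_pow, mul_div_assoc]
  gcongr
  rw [pow_mul]; positivity

theorem sinh_sq_le_mul_cosh_mul_cosh_sub_one {β σ : ℝ} (hβ : 1 ≤ β)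
    (hσ₄ : 1 ≤ σ * ((β + 1) / 2) ^ 4) (hσ₂ : 2 ≤ σ * (β ^ 2 + 1)) (t : ℝ) :
    sinh t ^ 2 ≤ σ * (cosh t * cosh (β * t) - 1) := by
  have hσ : 0 ≤ σ := by nlinarith
  have hT := cosh_sub_one_sub_sq_div_two_nonneg (2 * t)
  have hplus : ((β + 1) / 2) ^ 4 * (cosh (2 * t) - 1 - (2 * t) ^ 2 / 2) ≤
      cosh (β * t + t) - 1 - (β + 1) ^ 2 * t ^ 2 / 2 := by
    have h := pow_four_mul_cosh_sub_one_sub_sq_div_two_le (μ := (β + 1) / 2)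
      (by rw [abs_of_nonneg] <;> linarith) (2 * t)
    rwa [show (β + 1) / 2 * (2 * t) = β * t + t by ring,
      show (β * t + t) ^ 2 / 2 = (β + 1) ^ 2 * t ^ 2 / 2 by ring] at h
  have hminus : 1 + (β - 1) ^ 2 * t ^ 2 / 2 ≤ cosh (β * t - t) := by
    have h := cosh_sub_one_sub_sq_div_two_nonneg (β * t - t)
    linarith [show (β * t - t) ^ 2 = (β - 1) ^ 2 * t ^ 2 by ring]
  have hsinh : sinh t ^ 2 = (cosh (2 * t) - 1) / 2 := by
    rw [cosh_two_mul, cosh_sq]; ring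
  have hprod : cosh t * cosh (β * t) = (cosh (β * t + t) + cosh (β * t - t)) / 2 := by
    rw [cosh_add, cosh_sub]; ring
  rw [hsinh, hprod]
  linarith [mul_le_mul_of_nonneg_left hplus hσ, mul_le_mul_of_nonneg_left hminus hσ,
    mul_le_mul_of_nonneg_right hσ₂ (sq_nonneg t), mul_le_mul_of_nonneg_right hσ₄ hT]

theorem le_sin_mul_pi_div_two {α : ℝ} (h0 : 0 ≤ α) (h1 : α ≤ 1) : α ≤ sin (α * π / 2) := by
  have h := mul_le_sin (x := α * π / 2) (by positivity) (by nlinarith [pi_pos])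
  rwa [show 2 / π * (α * π / 2) = α by field_simp] at h

theorem sqrt_two_mul_le_sin_mul_pi_div_two {α : ℝ} (h0 : 0 ≤ α) (h1 : α ≤ 1 / 2) :
    √2 * α ≤ sin (α * π / 2) := by
  have h : (1 - 2 * α) * sin 0 + 2 * α * sin (π / 4) ≤
      sin ((1 - 2 * α) * 0 + 2 * α * (π / 4)) :=
    strictConcaveOn_sin_Icc.concaveOn.2 ⟨le_rfl, pi_pos.le⟩ ⟨by positivity, by linarith [pi_pos]⟩
      (by linarith) (by linarith) (by ring)
  rw [sin_zero, sin_pi_div_four] at h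
  convert h using 2 <;> ring

theorem two_mul_sq_le_sin_mul_pi_div_two_sq_mul {α : ℝ} (h0 : 0 ≤ α) (h1 : α ≤ 1) :
    2 * α ^ 2 ≤ sin (α * π / 2) ^ 2 * (1 + α ^ 2) := by
  rcases le_total α (1 / 2) with hα | hα
  · have hs2 : 2 * α ^ 2 ≤ sin (α * π / 2) ^ 2 :=
      calc 2 * α ^ 2 = (√2 * α) ^ 2 := by rw [mul_pow, sq_sqrt zero_le_two]
        _ ≤ _ := pow_le_pow_left₀ (by positivity) (sqrt_two_mul_le_sin_mul_pi_div_two h0 hα) 2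
    nlinarith [sq_nonneg α, sq_nonneg (sin (α * π / 2))]
  · obtain ⟨e, rfl⟩ : ∃ e, α = 1 - e := ⟨1 - α, by ring⟩
    have he0 : 0 ≤ e := by linarith
    have he1 : e ≤ 1 / 2 := by linarith
    have hsin : sin ((1 - e) * π / 2) = cos (e * π / 2) := by
      rw [← sin_pi_div_two_sub]; congr 1; ring
    -- `π² / 8 < 1.2338`
    have hcos : 1 - 1.2338 * e ^ 2 ≤ cos (e * π / 2) := by
      have hπ : π ^ 2 < 9.8704 := by nlinarith [pi_lt_d4, pi_pos]
      nlinarith [one_sub_sq_div_two_le_cos (x := e * π / 2),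
        mul_le_mul_of_nonneg_left hπ.le (sq_nonneg e)]
    have hpoly : 2 * (1 - e) ^ 2 ≤ (1 - 1.2338 * e ^ 2) ^ 2 * (1 + (1 - e) ^ 2) := by
      nlinarith [mul_nonneg he0 (sub_nonneg.2 he1), mul_nonneg he0 he0,
        mul_nonneg (mul_nonneg he0 he0) he0, mul_nonneg (mul_nonneg he0 he0) (sub_nonneg.2 he1),
        mul_nonneg (mul_nonneg (mul_nonneg he0 he0) he0) (sub_nonneg.2 he1)]
    have hc0 : 0 ≤ 1 - 1.2338 * e ^ 2 := by nlinarith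
    rw [hsin]
    nlinarith [pow_le_pow_left₀ hc0 hcos 2, sq_nonneg (1 - e)]

theorem cosh_sq_sub_cos_sq_le {α : ℝ} (h0 : 0 < α) (h1 : α ≤ 1) (t : ℝ) :
    cosh t ^ 2 - cos (α * π / 2) ^ 2 ≤ sin (α * π / 2) ^ 2 * (cosh t * cosh (t / α)) := by
  set s := sin (α * π / 2)
  set β := 1 / α
  have hαβ : α * β = 1 := mul_one_div_cancel h0.ne'
  have hβ : 1 ≤ β := one_le_one_div h0 h1
  have hs : α ≤ s := le_sin_mul_pi_div_two h0.le h1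
  have hσ₄ : 1 ≤ s ^ 2 * ((β + 1) / 2) ^ 4 := by
    -- `α (β + 1)² = α + β + 2 ≥ 4` since `α β = 1`
    have hsμ : 1 ≤ s * ((β + 1) / 2) ^ 2 := by
      nlinarith [mul_le_mul_of_nonneg_right hs (sq_nonneg ((β + 1) / 2)), sq_nonneg (α - β)]
    nlinarith
  have hσ₂ : 2 ≤ s ^ 2 * (β ^ 2 + 1) := by
    have h := two_mul_sq_le_sin_mul_pi_div_two_sq_mul h0.le h1
    have hα2 : 0 < α ^ 2 := by positivity
    refine le_of_mul_le_mul_right ?_ hα2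
    calc 2 * α ^ 2 ≤ s ^ 2 * (1 + α ^ 2) := h
      _ = s ^ 2 * (β ^ 2 + 1) * α ^ 2 := by linear_combination (-(s ^ 2) * (α * β + 1)) * hαβ
  have key := sinh_sq_le_mul_cosh_mul_cosh_sub_one hβ hσ₄ hσ₂ t
  rw [show β * t = t / α by ring] at key
  nlinarith [cosh_sq t, sin_sq_add_cos_sq (α * π / 2)]

theorem rational_expr_eq_hyperbolic {x : ℝ} (hx : 0 < x) (α c : ℝ) :
    x * (1 + x ^ 2) * (1 + x ^ ((2 : ℝ) / α)) /
        (x ^ ((1 : ℝ) / α) * ((1 + x ^ 2) ^ 2 - 4 * x ^ 2 * c ^ 2)) =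
      cosh (log x) * cosh (log x / α) / (cosh (log x) ^ 2 - c ^ 2) := by
  have one_add_sq {y : ℝ} (hy : 0 < y) : 1 + y ^ 2 = 2 * y * cosh (log y) := by
    rw [cosh_log hy]; field_simp; ring
  set X := x ^ ((1 : ℝ) / α)
  have hX : 0 < X := rpow_pos_of_pos hx _
  have hX2 : x ^ ((2 : ℝ) / α) = X ^ 2 := by
    rw [show (2 : ℝ) / α = 1 / α * 2 by ring, rpow_mul hx.le, rpow_two]
  have hlogX : log X = log x / α := by rw [log_rpow hx]; ring
  rw [hX2, one_add_sq hx, one_add_sq hX, hlogX,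
    show x * (2 * x * cosh (log x)) * (2 * X * cosh (log x / α)) =
      (4 * x ^ 2 * X) * (cosh (log x) * cosh (log x / α)) by ring,
    show X * ((2 * x * cosh (log x)) ^ 2 - 4 * x ^ 2 * c ^ 2) =
      (4 * x ^ 2 * X) * (cosh (log x) ^ 2 - c ^ 2) by ring]
  exact mul_div_mul_left _ _ (by positivity)

theorem lens_g_min (α : ℝ) (hα : α ∈ Set.Ioc (0:ℝ) 1)
    (g : ℝ → ℝ)
    (hg : ∀ x, g x = (x * (1 + x^2) * (1 + x ^ ((2:ℝ)/α))) /
      (x ^ ((1:ℝ)/α) * ((1 + x^2)^2 - 4 * x^2 * (Real.cos (α * π / 2))^2))) :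
    (∀ x > (0:ℝ), g x ≥ g 1) ∧ g 1 = 1 / (Real.sin (α * π / 2))^2 := by
  obtain ⟨h0, h1⟩ := hα
  have hs : 0 < sin (α * π / 2) := sin_pos_of_pos_of_lt_pi (by positivity) (by nlinarith [pi_pos])
  have hg1 : g 1 = 1 / sin (α * π / 2) ^ 2 := by
    rw [hg, rational_expr_eq_hyperbolic one_pos, log_one, zero_div, cosh_zero, one_pow, ← sin_sq]
    ring
  refine ⟨fun x hx ↦ ?_, hg1⟩
  rw [hg, rational_expr_eq_hyperbolic hx, hg1, ge_iff_le]
  have hD : 0 < cosh (log x) ^ 2 - cos (α * π / 2) ^ 2 := by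
    nlinarith [cosh_sq (log x), sin_sq_add_cos_sq (α * π / 2), sq_nonneg (sinh (log x))]
  rw [div_le_div_iff₀ (by positivity) hD, one_mul, mul_comm _ (sin _ ^ 2)]
  exact cosh_sq_sub_cos_sq_le h0 h1 (log x)
end

section
/- For α ∈ (0,1], every point z in the open unit disc satisfies Re{z ℓ_α'(z)/ℓ_α(z)} ≥ α/sin(απ/2); in particular Re{z ℓ_α'(z)/ℓ_α(z)} > 1/2 for α ∈ (0,1), i.e., ℓ_α is starlike of order at least 1/2. -/
set_option maxHeartbeats 1600000

open Real Complex

noncomputable def lensMap (α : ℝ) (z : ℂ) : ℂ :=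
  (((1 + z) / (1 - z)) ^ (α : ℂ) - 1) / (((1 + z) / (1 - z)) ^ (α : ℂ) + 1)

lemma sin_ge_sub_cube {t : ℝ} (ht : 0 ≤ t) : t - t^3/6 ≤ Real.sin t := by
  have hf : ∀ x : ℝ, HasDerivAt (fun y => Real.sin y - y + y^3/6)
      (Real.cos x - 1 + 3*x^2/6) x := by
    intro x
    exact ((Real.hasDerivAt_sin x).sub (hasDerivAt_id x)).add ((hasDerivAt_pow 3 x).div_const 6)
  have hmono : Monotone (fun y => Real.sin y - y + y^3/6) := by
    apply monotone_of_deriv_nonneg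
    · exact fun x => (hf x).differentiableAt
    · intro x
      rw [(hf x).deriv]
      nlinarith [Real.one_sub_sq_div_two_le_cos (x := x)]
  have := hmono ht
  simp only [Real.sin_zero] at this
  nlinarith [this]

lemma R1 {α : ℝ} (h0 : 0 ≤ α) (h1 : α ≤ 1) :
    2*α^2 ≤ Real.sin (α*π/2)^2 * (1+α^2) := by
  have hπ1 : 3.141592 < π := Real.pi_gt_d6
  have hπ2 : π < 3.15 := Real.pi_lt_d2
  have hπp : (0:ℝ) < π := Real.pi_pos
  have hP1 : 9.8696 ≤ π^2 := by nlinarith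
  have hP2 : π^2 ≤ 9.9226 := by nlinarith
  rcases le_or_gt α 0.7 with hc | hc
  · set t := α*π/2 with ht
    have ht0 : 0 ≤ t := by positivity
    have h := _root_.sin_ge_sub_cube ht0
    have ht2 : t^2 ≤ 1.2156 := by
      rw [ht]
      have : α^2 ≤ 0.49 := by nlinarith
      nlinarith
    have hposs : 0 ≤ t - t^3/6 := by nlinarith [mul_nonneg ht0 ht0, mul_nonneg (mul_nonneg ht0 ht0) ht0]
    have hsq : (t - t^3/6)^2 ≤ Real.sin t ^2 := by
      have hs0 : 0 ≤ Real.sin t := le_trans hposs h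
      nlinarith
    have key : 2*α^2 ≤ (t - t^3/6)^2 * (1+α^2) := by
      have hu : α^2 ≤ 0.49 := by nlinarith
      have expand : t - t^3/6 = α*(π/2)*(1 - α^2*(π^2)/24) := by rw [ht]; ring
      have hin : (0.79741:ℝ) ≤ 1 - α^2*(π^2)/24 := by nlinarith [sq_nonneg α]
      have hin2 : (1 - 0.413442*α^2) ≤ 1 - α^2*(π^2)/24 := by nlinarith [sq_nonneg α]
      have hpoly : (0.81058:ℝ) ≤ (1 - 0.413442*α^2)^2*(1+α^2) := by
        nlinarith [mul_nonneg (sq_nonneg α) (sub_nonneg.2 hu), sq_nonneg α,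
          pow_nonneg (sq_nonneg α) 3]
      have hsq2 : (1 - 0.413442*α^2)^2 ≤ (1 - α^2*(π^2)/24)^2 := by nlinarith [sq_nonneg α]
      rw [expand]
      have : 2*α^2 ≤ α^2*((π^2)/4)*(0.81058) := by nlinarith [sq_nonneg α]
      calc 2*α^2 ≤ α^2*((π^2)/4)*(0.81058) := this
        _ ≤ α^2*((π^2)/4)*((1 - α^2*(π^2)/24)^2*(1+α^2)) := by
            apply mul_le_mul_of_nonneg_left _ (by positivity)
            exact le_trans hpoly (by nlinarith [sq_nonneg α])
        _ = (α*(π/2)*(1 - α^2*(π^2)/24))^2 * (1+α^2) := by ring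
    nlinarith [sq_nonneg α]
  · have hsin : Real.sin (α*π/2) = Real.cos ((1-α)*π/2) := by
      rw [← Real.sin_pi_div_two_sub]; ring_nf
    set y := (1-α)*π/2 with hy
    set β := 1-α with hβ
    have hβ0 : 0 ≤ β := by simp [hβ]; linarith
    have hβ3 : β ≤ 0.3 := by rw [hβ]; linarith
    have hy2 : y^2 ≤ 2.48065*β^2 := by rw [hy]; nlinarith [sq_nonneg β]
    have hcos := Real.one_sub_sq_div_two_le_cos (x := y)
    have h3 : 1 - 1.2404*β^2 ≤ 1 - y^2/2 := by nlinarith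
    have hb0 : (0:ℝ) ≤ 1 - 1.2404*β^2 := by nlinarith [sq_nonneg β]
    have hsq : (1 - 1.2404*β^2)^2 ≤ Real.cos y^2 := by
      have h4 : 1 - 1.2404*β^2 ≤ Real.cos y := le_trans h3 hcos
      nlinarith
    rw [hsin]
    have hpoly : 2*α^2 ≤ (1 - 1.2404*β^2)^2 * (1+α^2) := by
      have hα : α = 1 - β := by rw [hβ]; ring
      rw [hα]
      nlinarith [mul_nonneg hβ0 (sub_nonneg.2 hβ3), mul_nonneg (mul_nonneg hβ0 hβ0) (sub_nonneg.2 hβ3),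
        mul_nonneg (mul_nonneg (mul_nonneg hβ0 hβ0) hβ0) (sub_nonneg.2 hβ3),
        mul_nonneg (mul_nonneg (mul_nonneg (mul_nonneg hβ0 hβ0) hβ0) hβ0) (sub_nonneg.2 hβ3),
        sq_nonneg β, mul_nonneg (mul_nonneg hβ0 hβ0) hβ0]
    nlinarith [sq_nonneg ((1:ℝ) + α^2), sq_nonneg α]

lemma pow_step (a b : ℝ) (hb : 0 ≤ b) (hba : b ≤ a) (n : ℕ) :
    (a^(2*n+2) + b^(2*n+2)) * (a-b)^2 ≤ a^(2*n+4) + b^(2*n+4) := by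
  have ha : 0 ≤ a := le_trans hb hba
  have e : ∀ (x:ℝ) (k:ℕ), x^(2*n+k) = (x^n)^2*x^k := by
    intro x k; rw [pow_add, two_mul, pow_add]; ring
  rw [e a 2, e b 2, e a 4, e b 4]
  have hu : (0:ℝ) ≤ a^n := pow_nonneg ha n
  have hv : (0:ℝ) ≤ b^n := pow_nonneg hb n
  have h1 : (0:ℝ) ≤ ((a^n)^2*(a^2*b))*(a-b) :=
    mul_nonneg (by positivity) (sub_nonneg.2 hba)
  have h2 : (0:ℝ) ≤ ((a^n)^2-(b^n)^2)*(a^2*b^2) :=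
    mul_nonneg (sub_nonneg.2 (by nlinarith [pow_le_pow_left₀ hb hba n])) (by positivity)
  have h3 : (0:ℝ) ≤ a*b^3*(b^n)^2 := by positivity
  nlinarith [h1, h2, h3]

lemma pow_main (a b : ℝ) (hb : 0 ≤ b) (hba : b ≤ a) (n : ℕ) :
    (a-b)^(2*n+2) * (a^2+b^2) ≤ (a-b)^2 * (a^(2*n+2)+b^(2*n+2)) := by
  induction n with
  | zero => ring_nf; exact le_refl _
  | succ n ih =>
    have hab2 : (0:ℝ) ≤ (a-b)^2 := sq_nonneg _
    calc (a-b)^(2*(n+1)+2) * (a^2+b^2)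
        = ((a-b)^(2*n+2) * (a^2+b^2)) * (a-b)^2 := by ring
      _ ≤ ((a-b)^2 * (a^(2*n+2)+b^(2*n+2))) * (a-b)^2 := mul_le_mul_of_nonneg_right ih hab2
      _ = (a-b)^2 * ((a^(2*n+2)+b^(2*n+2)) * (a-b)^2) := by ring
      _ ≤ (a-b)^2 * (a^(2*n+4)+b^(2*n+4)) :=
          mul_le_mul_of_nonneg_left (pow_step a b hb hba n) hab2
      _ = (a-b)^2 * (a^(2*(n+1)+2)+b^(2*(n+1)+2)) := by ring

lemma summable_aux (y : ℝ) : Summable (fun n : ℕ => y^(2*n+2)/((2*n+2).factorial : ℝ)) := by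
  have h := Real.summable_pow_div_factorial y
  exact h.comp_injective (fun a b hab => by simpa using hab : Function.Injective (fun n : ℕ => 2*n+2))

lemma cosh_sub_one_eq (y : ℝ) : Real.cosh y - 1 = ∑' n:ℕ, y^(2*n+2)/((2*n+2).factorial : ℝ) := by
  have hs : Summable (fun n : ℕ => y^(2*n)/((2*n).factorial : ℝ)) := by
    have h := Real.summable_pow_div_factorial y
    exact h.comp_injective (fun a b hab => by simpa using hab :
      Function.Injective (fun n : ℕ => 2*n))
  rw [Real.cosh_eq_tsum, Summable.tsum_eq_zero_add hs]
  have h0 : y^(2*0)/((2*0).factorial : ℝ) = 1 := by norm_num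
  rw [h0]
  have : ∀ n : ℕ, y^(2*(n+1))/((2*(n+1)).factorial : ℝ) = y^(2*n+2)/((2*n+2).factorial : ℝ) := by
    intro n; rw [show 2*(n+1) = 2*n+2 by ring]
  rw [tsum_congr this]; ring

lemma star {α : ℝ} (h0 : 0 < α) (h1 : α ≤ 1) (x : ℝ) :
    Real.sinh (α*x)^2 + Real.sin (α*π/2)^2
      ≤ Real.sin (α*π/2)^2 * (Real.cosh x * Real.cosh (α*x)) := by
  set s2 := Real.sin (α*π/2)^2 with hs2
  have hcoef : ∀ n : ℕ, (2*α)^(2*n+2) ≤ s2 * ((1+α)^(2*n+2) + (1-α)^(2*n+2)) := by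
    intro n
    have hq0 : (0:ℝ) ≤ 1 - α := by linarith
    have hqp : 1 - α ≤ 1 + α := by linarith
    have hpm := pow_main (1+α) (1-α) hq0 hqp n
    rw [show (1+α) - (1-α) = 2*α by ring, show (1+α)^2 + (1-α)^2 = 2*(1+α^2) by ring] at hpm
    have hR := R1 h0.le h1
    have hpq : (0:ℝ) < 2*(1+α^2) := by positivity
    have hpow : (0:ℝ) ≤ (1+α)^(2*n+2) + (1-α)^(2*n+2) := by positivity
    have h5 : (2*α)^(2*n+2) * (2*(1+α^2))
        ≤ (s2 * ((1+α)^(2*n+2)+(1-α)^(2*n+2))) * (2*(1+α^2)) := by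
      calc (2*α)^(2*n+2) * (2*(1+α^2))
          ≤ (2*α)^2 * ((1+α)^(2*n+2)+(1-α)^(2*n+2)) := hpm
        _ ≤ (s2*(2*(1+α^2))) * ((1+α)^(2*n+2)+(1-α)^(2*n+2)) :=
            mul_le_mul_of_nonneg_right (by nlinarith [hR]) hpow
        _ = (s2 * ((1+α)^(2*n+2)+(1-α)^(2*n+2))) * (2*(1+α^2)) := by ring
    exact le_of_mul_le_mul_right h5 hpq
  have key : Real.cosh (2*(α*x)) - 1
      ≤ s2*(Real.cosh ((1+α)*x) - 1) + s2*(Real.cosh ((1-α)*x) - 1) := by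
    rw [cosh_sub_one_eq (2*(α*x)), cosh_sub_one_eq ((1+α)*x), cosh_sub_one_eq ((1-α)*x),
      ← tsum_mul_left, ← tsum_mul_left,
      ← Summable.tsum_add ((summable_aux _).mul_left s2) ((summable_aux _).mul_left s2)]
    apply Summable.tsum_le_tsum _ (summable_aux _)
      (((summable_aux _).mul_left s2).add ((summable_aux _).mul_left s2))
    intro n
    have hxe : (0:ℝ) ≤ x^(2*n+2) := by
      rw [show 2*n+2 = (n+1)*2 by ring, pow_mul]; positivity
    have hfac : (0:ℝ) < ((2*n+2).factorial : ℝ) := by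
      exact_mod_cast Nat.factorial_pos _
    have hc := mul_le_mul_of_nonneg_right (hcoef n) hxe
    have e1 : (2*(α*x))^(2*n+2) = (2*α)^(2*n+2) * x^(2*n+2) := by
      rw [show 2*(α*x) = (2*α)*x by ring, mul_pow]
    have e2 : ((1+α)*x)^(2*n+2) = (1+α)^(2*n+2) * x^(2*n+2) := mul_pow _ _ _
    have e3 : ((1-α)*x)^(2*n+2) = (1-α)^(2*n+2) * x^(2*n+2) := mul_pow _ _ _
    have goal2 : (2*(α*x))^(2*n+2) ≤ s2*((1+α)*x)^(2*n+2) + s2*((1-α)*x)^(2*n+2) := by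
      rw [e1, e2, e3]; nlinarith [hc]
    have e4 : s2*(((1+α)*x)^(2*n+2)/((2*n+2).factorial : ℝ))
        + s2*(((1-α)*x)^(2*n+2)/((2*n+2).factorial : ℝ))
        = (s2*((1+α)*x)^(2*n+2) + s2*((1-α)*x)^(2*n+2))/((2*n+2).factorial : ℝ) := by ring
    rw [e4]
    exact (div_le_div_iff_of_pos_right hfac).2 goal2
  have e1 : Real.sinh (α*x)^2 = (Real.cosh (2*(α*x)) - 1)/2 := by
    rw [Real.cosh_two_mul, Real.cosh_sq]; ring
  have e2 : Real.cosh x * Real.cosh (α*x)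
      = (Real.cosh ((1+α)*x) + Real.cosh ((1-α)*x))/2 := by
    rw [show (1+α)*x = x + α*x by ring, show (1-α)*x = x - α*x by ring,
      Real.cosh_add, Real.cosh_sub]; ring
  rw [e1, e2]; linarith [key]
lemma csinh_re (z : ℂ) : (Complex.sinh z).re = Real.sinh z.re * Real.cos z.im := by
  conv_lhs => rw [← Complex.re_add_im z]
  rw [Complex.sinh_add, Complex.sinh_mul_I, Complex.cosh_mul_I]
  simp [Complex.sinh_ofReal_re, Complex.cos_ofReal_re, Complex.sin_ofReal_re,
    Complex.cosh_ofReal_re, Complex.sinh_ofReal_im, Complex.cos_ofReal_im,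
    Complex.sin_ofReal_im, Complex.cosh_ofReal_im]
lemma csinh_im (z : ℂ) : (Complex.sinh z).im = Real.cosh z.re * Real.sin z.im := by
  conv_lhs => rw [← Complex.re_add_im z]
  rw [Complex.sinh_add, Complex.sinh_mul_I, Complex.cosh_mul_I]
  simp [Complex.sinh_ofReal_re, Complex.cos_ofReal_re, Complex.sin_ofReal_re,
    Complex.cosh_ofReal_re, Complex.sinh_ofReal_im, Complex.cos_ofReal_im,
    Complex.sin_ofReal_im, Complex.cosh_ofReal_im]

noncomputable def Nf (α : ℝ) : ℂ → ℂ := dslope (fun v => Complex.sinh ((α:ℂ)*v)) 0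
noncomputable def Df : ℂ → ℂ := dslope Complex.sinh 0

lemma diff_Nf (α : ℝ) : Differentiable ℂ (Nf α) := by
  rw [← differentiableOn_univ, Nf, Complex.differentiableOn_dslope Filter.univ_mem]
  exact (Complex.differentiable_sinh.comp (differentiable_id.const_mul _)).differentiableOn

lemma diff_Df : Differentiable ℂ Df := by
  rw [← differentiableOn_univ, Df, Complex.differentiableOn_dslope Filter.univ_mem]
  exact Complex.differentiable_sinh.differentiableOn

lemma sinh_ne_zero_strip {u : ℂ} (him : |u.im| < π) (hu : u ≠ 0) : Complex.sinh u ≠ 0 := by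
  intro hz
  have hdef : (Complex.exp u - Complex.exp (-u))/2 = 0 := hz
  have h1 : Complex.exp u = Complex.exp (-u) := by
    field_simp at hdef; linear_combination hdef
  have h2 : Complex.exp (2*u) = 1 := by
    have := congrArg (· * Complex.exp u) h1
    rw [← Complex.exp_add, ← Complex.exp_add] at this
    simpa [show -u + u = 0 by ring, Complex.exp_zero, show u + u = 2*u by ring] using this
  obtain ⟨n, hn⟩ := Complex.exp_eq_one_iff.1 h2
  have him2 : (2*u).im = ((n:ℂ) * (2*π*Complex.I)).im := by rw [hn]
  have him3 : 2*u.im = (n:ℝ)*(2*π) := by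
    simpa [Complex.mul_im, Complex.mul_re] using him2
  have hn0 : n = 0 := by
    have hπ := Real.pi_pos
    rcases lt_trichotomy n 0 with h|h|h
    · have hn1 : n ≤ -1 := by omega
      have : (n:ℝ) ≤ -1 := by exact_mod_cast hn1
      have : 2*u.im ≤ -(2*π) := by nlinarith
      have := _root_.abs_lt.1 him; nlinarith
    · exact h
    · have : (1:ℝ) ≤ (n:ℝ) := by exact_mod_cast h
      have : 2*π ≤ 2*u.im := by nlinarith
      have := _root_.abs_lt.1 him; nlinarith
  rw [hn0] at hn
  push_cast at hn
  simp at hn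
  exact hu hn

lemma Df_ne {w : ℂ} (him : |w.im| < π) : Df w ≠ 0 := by
  rcases eq_or_ne w 0 with rfl|hw
  · rw [Df, dslope_same, Complex.deriv_sinh, Complex.cosh_zero]; exact one_ne_zero
  · rw [Df, dslope_of_ne _ hw, slope_def_field]
    simp only [Complex.sinh_zero, sub_zero]
    exact div_ne_zero (sinh_ne_zero_strip him hw) (by simpa using hw)

lemma Nf_val (α : ℝ) {w : ℂ} (hw : w ≠ 0) : Nf α w = Complex.sinh ((α:ℂ)*w)/w := by
  rw [Nf, dslope_of_ne _ hw, slope_def_field]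
  simp

lemma Df_val {w : ℂ} (hw : w ≠ 0) : Df w = Complex.sinh w / w := by
  rw [Df, dslope_of_ne _ hw, slope_def_field]
  simp

lemma ratio_val (α : ℝ) {w : ℂ} (hw : w ≠ 0) (hs : Complex.sinh w ≠ 0) :
    Nf α w / Df w = Complex.sinh ((α:ℂ)*w) / Complex.sinh w := by
  rw [Nf_val α hw, Df_val hw]
  field_simp

lemma re_mul_conj (A B : ℂ) : (A * (starRingEnd ℂ) B).re = A.re*B.re + A.im*B.im := by
  simp [Complex.mul_re]

lemma normSq_sinh (v : ℂ) :
    Complex.normSq (Complex.sinh v) = Real.sinh v.re^2 + Real.sin v.im^2 := by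
  rw [Complex.normSq_apply, csinh_re v, csinh_im v]
  have h1 := Real.sin_sq_add_cos_sq v.im
  have h2 := Real.cosh_sq v.re
  nlinarith [h1, h2]

lemma key_iff {A B : ℂ} (hB : B ≠ 0) {s : ℝ} (hs : 0 < s) :
    ‖A/B - (s:ℂ)/2‖ ≤ s/2 ↔ Complex.normSq A ≤ s * (A * (starRingEnd ℂ) B).re := by
  have hBn : 0 < Complex.normSq B := Complex.normSq_pos.2 hB
  have h1 : A/B - (s:ℂ)/2 = (A - (s:ℂ)/2*B)/B := by field_simp
  have h2 : ‖A/B - (s:ℂ)/2‖^2 = Complex.normSq (A - (s:ℂ)/2*B) / Complex.normSq B := by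
    rw [h1, norm_div, div_pow,
      Complex.sq_norm, Complex.sq_norm]
  have h3 : Complex.normSq (A - (s:ℂ)/2*B)
      = Complex.normSq A - s*(A * (starRingEnd ℂ) B).re + s^2/4*Complex.normSq B := by
    simp [Complex.normSq_apply, Complex.mul_re, Complex.mul_im, Complex.div_re,
      Complex.div_im, Complex.normSq_apply, re_mul_conj]
    ring
  constructor
  · intro h
    have hsq : ‖A/B - (s:ℂ)/2‖^2 ≤ (s/2)^2 :=
      pow_le_pow_left₀ (norm_nonneg _) h 2
    rw [h2, h3] at hsq
    rw [div_le_iff₀ hBn] at hsq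
    nlinarith [hsq]
  · intro h
    have hsq : ‖A/B - (s:ℂ)/2‖^2 ≤ (s/2)^2 := by
      rw [h2, h3, div_le_iff₀ hBn]
      nlinarith [h]
    have := Real.sqrt_le_sqrt hsq
    rwa [Real.sqrt_sq (norm_nonneg _), Real.sqrt_sq (by positivity)] at this

lemma exists_T (α : ℝ) (h0 : 0 < α) (h1 : α < 1) {s : ℝ} (hs : 0 < s) (r : ℝ) :
    ∃ T : ℝ, |r| < T ∧ 1 ≤ T ∧
      Real.sinh (α*T)^2 + 1 ≤ s^2 * (Real.sinh (α*T) * Real.sinh T) := by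
  refine ⟨max (|r|+1) (max (1/α + 1) (Real.log (4/s^2)/(1-α) + 1)), ?_, ?_, ?_⟩
  · calc |r| < |r|+1 := by linarith
      _ ≤ _ := le_max_left _ _
  · have h : 1/α + 1 ≤ max (|r|+1) (max (1/α + 1) (Real.log (4/s^2)/(1-α) + 1)) :=
      le_trans (le_max_left _ _) (le_max_right _ _)
    have : 0 < 1/α := by positivity
    linarith
  · set T := max (|r|+1) (max (1/α + 1) (Real.log (4/s^2)/(1-α) + 1)) with hT
    have hTa : 1/α + 1 ≤ T := le_trans (le_max_left _ _) (le_max_right _ _)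
    have hTl : Real.log (4/s^2)/(1-α) + 1 ≤ T := le_trans (le_max_right _ _) (le_max_right _ _)
    have hT1 : 1 ≤ T := by
      have : 0 < 1/α := by positivity
      linarith
    have hαT1 : 1 ≤ α*T := by
      have : α*(1/α+1) ≤ α*T := mul_le_mul_of_nonneg_left hTa h0.le
      have e : α*(1/α+1) = 1 + α := by field_simp
      nlinarith
    have hSh1 : 1 ≤ Real.sinh (α*T) :=
      le_trans hαT1 (Real.self_le_sinh_iff.2 (by linarith))
    have hShα0 : 0 < Real.sinh (α*T) := by linarith
    have hET : Real.exp T/4 ≤ Real.sinh T := by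
      rw [Real.sinh_eq]
      have h2T : (2:ℝ) ≤ Real.exp (2*T) := by
        have := Real.add_one_le_exp (2*T)
        linarith
      have hpos := Real.exp_pos T
      have hprod : Real.exp T * Real.exp T = Real.exp (2*T) := by
        rw [← Real.exp_add]; ring_nf
      have : Real.exp (-T) = 1/Real.exp T := by
        rw [Real.exp_neg]; field_simp
      rw [this]
      rw [div_le_div_iff₀ (by norm_num) (by norm_num)]
      have : 1/Real.exp T ≤ Real.exp T/2 := by
        rw [div_le_div_iff₀ hpos (by norm_num)]
        nlinarith
      nlinarith
    have hexplog : 4/s^2 ≤ Real.exp ((1-α)*T) := by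
      have hx : Real.log (4/s^2) ≤ (1-α)*T := by
        have h1α : 0 < 1-α := by linarith
        have := mul_le_mul_of_nonneg_left hTl h1α.le
        have e : (1-α)*(Real.log (4/s^2)/(1-α) + 1) = Real.log (4/s^2) + (1-α) := by
          field_simp
        nlinarith
      calc 4/s^2 = Real.exp (Real.log (4/s^2)) := (Real.exp_log (by positivity)).symm
        _ ≤ Real.exp ((1-α)*T) := Real.exp_le_exp.2 hx
    have hEα : Real.exp (α*T) ≤ s^2*Real.exp T/4 := by
      have hsplit : Real.exp T = Real.exp (α*T) * Real.exp ((1-α)*T) := by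
        rw [← Real.exp_add]; ring_nf
      have h4 : Real.exp (α*T) * (4/s^2) ≤ Real.exp T := by
        rw [hsplit]
        exact mul_le_mul_of_nonneg_left hexplog (Real.exp_pos _).le
      have e : Real.exp (α*T) = (Real.exp (α*T)*(4/s^2))*(s^2/4) := by
        field_simp
      rw [e]
      calc (Real.exp (α*T)*(4/s^2))*(s^2/4) ≤ Real.exp T * (s^2/4) :=
            mul_le_mul_of_nonneg_right h4 (by positivity)
        _ = s^2*Real.exp T/4 := by ring
    have hShαe : Real.sinh (α*T) ≤ Real.exp (α*T)/2 := by
      rw [Real.sinh_eq]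
      have := Real.exp_pos (-(α*T))
      linarith
    have c1 : 2*Real.sinh (α*T) ≤ s^2*Real.sinh T := by
      calc 2*Real.sinh (α*T) ≤ Real.exp (α*T) := by linarith
        _ ≤ s^2*Real.exp T/4 := hEα
        _ = s^2*(Real.exp T/4) := by ring
        _ ≤ s^2*Real.sinh T := mul_le_mul_of_nonneg_left hET (by positivity)
    nlinarith [mul_le_mul_of_nonneg_left c1 hShα0.le, hSh1, hShα0]

lemma horiz (α : ℝ) (h0 : 0 < α) (h1 : α ≤ 1) (w : ℂ)
    (hwim : w.im = -(π/2) ∨ w.im = π/2) :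
    Complex.normSq (Complex.sinh ((α:ℂ)*w))
      ≤ Real.sin (α*π/2)
        * ((Complex.sinh ((α:ℂ)*w) * (starRingEnd ℂ) (Complex.sinh w)).re) := by
  have hre : ((α:ℂ)*w).re = α*w.re := Complex.re_ofReal_mul _ _
  have him : ((α:ℂ)*w).im = α*w.im := Complex.im_ofReal_mul _ _
  rw [normSq_sinh, re_mul_conj, csinh_re, csinh_im, csinh_re, csinh_im, hre, him]
  have hstar := star h0 h1 w.re
  rcases hwim with h|h <;> rw [h]
  · simp only [show α*(-(π/2)) = -(α*π/2) by ring, Real.sin_neg, Real.cos_neg,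
      Real.cos_pi_div_two, Real.sin_pi_div_two]
    nlinarith [hstar]
  · simp only [show α*(π/2) = α*π/2 by ring, Real.cos_pi_div_two, Real.sin_pi_div_two]
    nlinarith [hstar]

lemma sinprod_nonneg {α y : ℝ} (h0 : 0 < α) (h1 : α ≤ 1) (hy : |y| ≤ π/2) :
    0 ≤ Real.sin (α*y) * Real.sin y := by
  have key : ∀ t : ℝ, 0 ≤ t → t ≤ π/2 → 0 ≤ Real.sin (α*t) * Real.sin t := by
    intro t ht0 ht1
    have hπ := Real.pi_pos
    apply mul_nonneg
    · apply Real.sin_nonneg_of_nonneg_of_le_pi (by positivity)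
      nlinarith
    · apply Real.sin_nonneg_of_nonneg_of_le_pi ht0
      linarith
  rcases le_or_gt 0 y with h|h
  · exact key y h (le_of_abs_le hy)
  · have h2 := key (-y) (by linarith) (by rw [_root_.abs_of_neg h] at hy; linarith)
    rw [mul_neg, Real.sin_neg, Real.sin_neg] at h2
    nlinarith [h2]

lemma vert (α : ℝ) (h0 : 0 < α) (h1 : α < 1) (T : ℝ) (hT : 1 ≤ T)
    (hcond : Real.sinh (α*T)^2 + 1
      ≤ Real.sin (α*π/2)^2 * (Real.sinh (α*T) * Real.sinh T))
    (w : ℂ) (hwre : w.re = -T ∨ w.re = T) (hwim : |w.im| ≤ π/2) :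
    Complex.normSq (Complex.sinh ((α:ℂ)*w))
      ≤ Real.sin (α*π/2)
        * ((Complex.sinh ((α:ℂ)*w) * (starRingEnd ℂ) (Complex.sinh w)).re) := by
  have hre : ((α:ℂ)*w).re = α*w.re := Complex.re_ofReal_mul _ _
  have him : ((α:ℂ)*w).im = α*w.im := Complex.im_ofReal_mul _ _
  rw [normSq_sinh, re_mul_conj, csinh_re, csinh_im, csinh_re, csinh_im, hre, him]
  set y := w.im with hy
  set s := Real.sin (α*π/2) with hsdef
  have hπ := Real.pi_pos
  have hs0 : 0 < s := by
    apply Real.sin_pos_of_pos_of_lt_pi (by positivity)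
    nlinarith
  have core : Real.sinh (α*T)^2 + Real.sin (α*y)^2
      ≤ s * (Real.sinh (α*T) * Real.cos (α*y) * (Real.sinh T * Real.cos y)
        + Real.cosh (α*T) * Real.sin (α*y) * (Real.cosh T * Real.sin y)) := by
    have hsp := sinprod_nonneg h0 h1.le hwim
    have hαT0 : 0 < α*T := by positivity
    have hShα : 0 < Real.sinh (α*T) := Real.sinh_pos_iff.2 hαT0
    have hShT : 0 < Real.sinh T := Real.sinh_pos_iff.2 (by linarith)
    have hchα : Real.sinh (α*T) ≤ Real.cosh (α*T) := by
      have := Real.cosh_sub_sinh (α*T); have := Real.exp_pos (-(α*T)); linarith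
    have hchT : Real.sinh T ≤ Real.cosh T := by
      have := Real.cosh_sub_sinh T; have := Real.exp_pos (-T); linarith
    have hprod : Real.sinh (α*T) * Real.sinh T ≤ Real.cosh (α*T) * Real.cosh T :=
      mul_le_mul hchα hchT hShT.le (by linarith)
    have hcosb : s ≤ Real.cos (y - α*y) := by
      have e1 : Real.cos (y - α*y) = Real.cos (|(1-α)*y|) := by
        rw [Real.cos_abs, show y - α*y = (1-α)*y by ring]
      rw [e1]
      have h2 : |(1-α)*y| ≤ (1-α)*(π/2) := by
        rw [_root_.abs_mul, _root_.abs_of_nonneg (by linarith : (0:ℝ) ≤ 1-α)]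
        apply mul_le_mul_of_nonneg_left hwim (by linarith)
      calc s = Real.cos (π/2 - α*π/2) := by
            rw [Real.cos_pi_div_two_sub]
        _ ≤ Real.cos (|(1-α)*y|) := by
            apply Real.cos_le_cos_of_nonneg_of_le_pi (_root_.abs_nonneg _) (by nlinarith)
            calc |(1-α)*y| ≤ (1-α)*(π/2) := h2
              _ = π/2 - α*π/2 := by ring
    have hcossub : Real.cos (y - α*y)
        = Real.cos y * Real.cos (α*y) + Real.sin y * Real.sin (α*y) := Real.cos_sub y (α*y)
    have hsin2 : Real.sin (α*y)^2 ≤ 1 := by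
      nlinarith [Real.neg_one_le_sin (α*y), Real.sin_le_one (α*y)]
    -- chain
    have step1 : Real.sinh (α*T)^2 + Real.sin (α*y)^2 ≤ s^2*(Real.sinh (α*T)*Real.sinh T) := by
      rw [hsdef] at hcond ⊢
      linarith
    have step2 : s*(Real.sinh (α*T)*Real.sinh T) ≤ (Real.sinh (α*T)*Real.sinh T) * Real.cos (y - α*y) := by
      have hp : 0 ≤ Real.sinh (α*T)*Real.sinh T := by positivity
      nlinarith [mul_le_mul_of_nonneg_left hcosb hp]
    have step3 : (Real.sinh (α*T)*Real.sinh T) * Real.cos (y - α*y)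
        ≤ Real.sinh (α*T) * Real.cos (α*y) * (Real.sinh T * Real.cos y)
          + Real.cosh (α*T) * Real.sin (α*y) * (Real.cosh T * Real.sin y) := by
      rw [hcossub]
      nlinarith [mul_le_mul_of_nonneg_right hprod (by nlinarith [hsp] : (0:ℝ) ≤ Real.sin (α*y) * Real.sin y)]
    -- combine: LHS ≤ s²(ShαShT) = s·(s·ShαShT) ≤ s·(ShαShT cos) ≤ s·RHSinner
    calc Real.sinh (α*T)^2 + Real.sin (α*y)^2
        ≤ s^2*(Real.sinh (α*T)*Real.sinh T) := step1
      _ = s*(s*(Real.sinh (α*T)*Real.sinh T)) := by ring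
      _ ≤ s*((Real.sinh (α*T)*Real.sinh T) * Real.cos (y - α*y)) :=
          mul_le_mul_of_nonneg_left step2 hs0.le
      _ ≤ s*(Real.sinh (α*T) * Real.cos (α*y) * (Real.sinh T * Real.cos y)
          + Real.cosh (α*T) * Real.sin (α*y) * (Real.cosh T * Real.sin y)) :=
          mul_le_mul_of_nonneg_left step3 hs0.le
  rcases hwre with h|h <;> rw [h]
  · rw [show α*(-T) = -(α*T) by ring, Real.sinh_neg, Real.sinh_neg,
      Real.cosh_neg, Real.cosh_neg]
    nlinarith [core]
  · exact core

lemma strip_ineq (α : ℝ) (h0 : 0 < α) (h1 : α < 1) {u : ℂ} (him : |u.im| < π/2)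
    (hu : u ≠ 0) :
    1/Real.sin (α*π/2) ≤ (Complex.sinh u / Complex.sinh ((α:ℂ)*u)).re := by
  have hπ := Real.pi_pos
  set s := Real.sin (α*π/2) with hsdef
  have hs0 : 0 < s := by
    apply Real.sin_pos_of_pos_of_lt_pi (by positivity)
    nlinarith
  obtain ⟨T, hrT, hT1, hcond⟩ := exists_T α h0 h1 hs0 u.re
  set U : Set ℂ := (Set.Ioo (-T) T) ×ℂ (Set.Ioo (-(π/2)) (π/2)) with hU
  have hTpos : 0 < T := by linarith
  have hbdd : Bornology.IsBounded U := by
    apply (Metric.isBounded_closedBall (x := (0:ℂ)) (r := T + π)).subset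
    intro w hw
    rw [hU, Complex.mem_reProdIm] at hw
    rw [Metric.mem_closedBall, dist_zero_right]
    have h1 := _root_.abs_lt.2 ⟨hw.1.1, hw.1.2⟩
    have h2 := _root_.abs_lt.2 ⟨hw.2.1, hw.2.2⟩
    calc ‖w‖ = ‖w‖ := rfl
      _ ≤ |w.re| + |w.im| := Complex.norm_le_abs_re_add_abs_im w
      _ ≤ T + π := by linarith
  have hclsub : closure U ⊆ {w : ℂ | |w.im| < π} := by
    rw [hU, Complex.closure_reProdIm, closure_Ioo (by linarith : -T ≠ T),
      closure_Ioo (by linarith : -(π/2) ≠ π/2)]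
    intro w hw
    rw [Complex.mem_reProdIm] at hw
    have := hw.2
    simp only [Set.mem_setOf_eq]
    rw [_root_.abs_lt]
    constructor <;> [nlinarith [this.1]; nlinarith [this.2]]
  have hg : DiffContOnCl ℂ (fun w => Nf α w / Df w - (s:ℂ)/2) U := by
    apply DifferentiableOn.diffContOnCl
    intro w hw
    apply DifferentiableAt.differentiableWithinAt
    exact (((diff_Nf α) w).div (diff_Df w) (Df_ne (hclsub hw))).sub_const _
  have hsne : ∀ w : ℂ, w ≠ 0 → |w.im| < π → Nf α w / Df w = Complex.sinh ((α:ℂ)*w) / Complex.sinh w :=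
    fun w hw0 hwim => ratio_val α hw0 (sinh_ne_zero_strip hwim hw0)
  have hbound : ∀ w ∈ frontier U, ‖Nf α w / Df w - (s:ℂ)/2‖ ≤ s/2 := by
    intro w hwf
    rw [hU, Complex.frontier_reProdIm, closure_Ioo (by linarith : -(π/2) ≠ π/2),
      frontier_Ioo (by linarith : -(π/2) < π/2), closure_Ioo (by linarith : -T ≠ T),
      frontier_Ioo (by linarith : -T < T)] at hwf
    rcases hwf with hA|hB
    · -- horizontal: w.im ∈ {-(π/2), π/2}
      rw [Complex.mem_reProdIm] at hA
      have himw : w.im = -(π/2) ∨ w.im = π/2 := by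
        rcases hA.2 with h|h
        · exact Or.inl h
        · exact Or.inr h
      have hw0 : w ≠ 0 := by
        intro h
        rcases himw with h'|h' <;> rw [h] at h' <;> simp at h' <;> nlinarith
      have hwimπ : |w.im| < π := by
        rcases himw with h'|h' <;> rw [h', _root_.abs_lt] <;> constructor <;> nlinarith
      rw [hsne w hw0 hwimπ]
      exact (key_iff (sinh_ne_zero_strip hwimπ hw0) hs0).2 (horiz α h0 h1.le w himw)
    · -- vertical: w.re ∈ {-T, T}
      rw [Complex.mem_reProdIm] at hB
      have hrew : w.re = -T ∨ w.re = T := by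
        rcases hB.1 with h|h
        · exact Or.inl h
        · exact Or.inr h
      have hw0 : w ≠ 0 := by
        intro h
        rcases hrew with h'|h' <;> rw [h] at h' <;> simp at h' <;> nlinarith
      have hwim2 : |w.im| ≤ π/2 := _root_.abs_le.2 ⟨hB.2.1, hB.2.2⟩
      have hwimπ : |w.im| < π := by rw [_root_.abs_le] at hwim2; rw [_root_.abs_lt]; constructor <;> nlinarith
      rw [hsne w hw0 hwimπ]
      exact (key_iff (sinh_ne_zero_strip hwimπ hw0) hs0).2 (vert α h0 h1 T hT1 hcond w hrew hwim2)
  have humem : u ∈ closure U := by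
    apply subset_closure
    rw [hU, Complex.mem_reProdIm]
    have h1 := _root_.abs_lt.1 hrT
    have h2 := _root_.abs_lt.1 him
    exact ⟨⟨h1.1, h1.2⟩, ⟨h2.1, h2.2⟩⟩
  have hmax := Complex.norm_le_of_forall_mem_frontier_norm_le hbdd hg hbound humem
  have huimπ : |u.im| < π := by rw [_root_.abs_lt] at him ⊢; constructor <;> nlinarith [him.1, him.2]
  rw [hsne u hu huimπ] at hmax
  have hsinhu : Complex.sinh u ≠ 0 := sinh_ne_zero_strip huimπ hu
  have hαu : (α:ℂ)*u ≠ 0 := mul_ne_zero (Complex.ofReal_ne_zero.2 h0.ne') hu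
  have hαuim : |((α:ℂ)*u).im| < π := by
    rw [Complex.im_ofReal_mul, _root_.abs_mul, _root_.abs_of_pos h0]
    nlinarith [_root_.abs_nonneg u.im]
  have hsinhαu : Complex.sinh ((α:ℂ)*u) ≠ 0 := sinh_ne_zero_strip hαuim hαu
  have hkey := (key_iff hsinhu hs0).1 hmax
  have hnsq : 0 < Complex.normSq (Complex.sinh ((α:ℂ)*u)) := Complex.normSq_pos.2 hsinhαu
  have hre : (Complex.sinh u / Complex.sinh ((α:ℂ)*u)).re
      = ((Complex.sinh ((α:ℂ)*u)) * (starRingEnd ℂ) (Complex.sinh u)).re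
        / Complex.normSq (Complex.sinh ((α:ℂ)*u)) := by
    rw [Complex.div_re, re_mul_conj]
    ring
  rw [hre, div_le_div_iff₀ hs0 hnsq]
  nlinarith [hkey]


lemma lens_deriv (α : ℝ) (h0 : 0 < α) (h1 : α ≤ 1) (z : ℂ) (hz : ‖z‖ < 1) (hz0 : z ≠ 0) :
    z * deriv (lensMap α) z / lensMap α z
      = (α:ℂ) * Complex.sinh (Complex.log ((1+z)/(1-z)))
        / Complex.sinh ((α:ℂ) * Complex.log ((1+z)/(1-z))) := by
  have hπ := Real.pi_pos
  have h1z : (1:ℂ) - z ≠ 0 := by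
    intro h
    have : z = 1 := by linear_combination -h
    rw [this] at hz; simp at hz
  have h1z' : (1:ℂ) + z ≠ 0 := by
    intro h
    have : z = -1 := by linear_combination h
    rw [this] at hz; simp at hz
  set w : ℂ := (1+z)/(1-z) with hwdef
  have hw0 : w ≠ 0 := div_ne_zero h1z' h1z
  have hnsq : 0 < Complex.normSq (1-z) := Complex.normSq_pos.2 h1z
  have hzsq : z.re^2 + z.im^2 < 1 := by
    have h := hz
    rw [← Real.sqrt_one] at h
    have h2 : ‖z‖^2 < 1 := by
      nlinarith [norm_nonneg z, hz]
    rw [Complex.sq_norm, Complex.normSq_apply] at h2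
    nlinarith [h2]
  have hwre : 0 < w.re := by
    rw [hwdef, Complex.div_re, ← add_div]
    apply div_pos _ hnsq
    simp only [Complex.add_re, Complex.add_im, Complex.sub_re, Complex.sub_im,
      Complex.one_re, Complex.one_im]
    nlinarith [hzsq]
  set u : ℂ := Complex.log w with hudef
  have hexpu : Complex.exp u = w := Complex.exp_log hw0
  have him : |u.im| < π/2 := by
    rw [hudef, Complex.log_im]
    exact Complex.abs_arg_lt_pi_div_two_iff.2 (Or.inl hwre)
  have hune : u ≠ 0 := by
    intro h
    rw [h, Complex.exp_zero] at hexpu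
    have : (1:ℂ)+z = 1-z := by
      rw [hwdef, eq_div_iff h1z] at hexpu
      linear_combination -hexpu
    have : z = 0 := by linear_combination this/2
    exact hz0 this
  have hαune : (α:ℂ)*u ≠ 0 := mul_ne_zero (Complex.ofReal_ne_zero.2 h0.ne') hune
  have hαuim : |((α:ℂ)*u).im| < π := by
    rw [Complex.im_ofReal_mul, _root_.abs_mul, _root_.abs_of_pos h0]
    nlinarith [_root_.abs_nonneg u.im, _root_.abs_lt.1 him]
  have hsinhαu : Complex.sinh ((α:ℂ)*u) ≠ 0 := sinh_ne_zero_strip hαuim hαune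
  set E : ℂ := Complex.exp ((α:ℂ)*u) with hEdef
  have hE0 : E ≠ 0 := Complex.exp_ne_zero _
  have hcpow : w ^ (α:ℂ) = E := by
    rw [Complex.cpow_def_of_ne_zero hw0, hEdef, hudef, mul_comm]
  have hcpow' : w ^ ((α:ℂ)-1) = E/w := by
    rw [Complex.cpow_def_of_ne_zero hw0, mul_sub, mul_one, Complex.exp_sub, hEdef, hudef,
      mul_comm, hexpu]
  have hreE : 0 < E.re := by
    rw [hEdef, Complex.exp_re]
    apply mul_pos (Real.exp_pos _)
    apply Real.cos_pos_of_mem_Ioo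
    constructor
    · rw [Complex.im_ofReal_mul]
      nlinarith [_root_.abs_lt.1 him, _root_.abs_nonneg u.im]
    · rw [Complex.im_ofReal_mul]
      nlinarith [_root_.abs_lt.1 him, _root_.abs_nonneg u.im]
  have hEp1 : E + 1 ≠ 0 := by
    intro h
    have : E = -1 := by linear_combination h
    rw [this] at hreE; simp at hreE; linarith
  have hEm1 : E - 1 ≠ 0 := by
    intro h
    apply hsinhαu
    have hE1 : E = 1 := by linear_combination h
    show (Complex.exp ((α:ℂ)*u) - Complex.exp (-((α:ℂ)*u)))/2 = 0
    rw [Complex.exp_neg, ← hEdef, hE1]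
    simp
  -- derivative
  have hWd : HasDerivAt (fun y : ℂ => (1+y)/(1-y))
      ((1*(1-z) - (1+z)*(-1))/(1-z)^2) z := by
    apply HasDerivAt.div
    · simpa using (hasDerivAt_id z).const_add (1:ℂ)
    · simpa using (hasDerivAt_id z).const_sub (1:ℂ)
    · exact h1z
  have hcp : HasDerivAt (fun y : ℂ => ((1+y)/(1-y)) ^ (α:ℂ))
      ((α:ℂ) * w ^ ((α:ℂ)-1) * ((1*(1-z) - (1+z)*(-1))/(1-z)^2)) z := by
    apply HasDerivAt.cpow_const hWd
    rw [Complex.mem_slitPlane_iff]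
    exact Or.inl hwre
  set dW : ℂ := (1*(1-z) - (1+z)*(-1))/(1-z)^2 with hdW
  set ξ' : ℂ := (α:ℂ) * w ^ ((α:ℂ)-1) * dW with hξ'
  have hL : HasDerivAt (lensMap α)
      ((ξ' * (w ^ (α:ℂ) + 1) - (w ^ (α:ℂ) - 1) * ξ')/(w ^ (α:ℂ) + 1)^2) z := by
    unfold lensMap
    apply HasDerivAt.div (hcp.sub_const 1) (hcp.add_const 1)
    rw [hcpow]; exact hEp1
  have hd := hL.deriv
  have hE21 : E^2 - 1 ≠ 0 := by
    have e : E^2 - 1 = (E-1)*(E+1) := by ring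
    rw [e]
    exact mul_ne_zero hEm1 hEp1
  have hval : lensMap α z = (E-1)/(E+1) := by
    unfold lensMap
    rw [← hwdef, hcpow]
  have hsinhu : Complex.sinh u = (w - w⁻¹)/2 := by
    show (Complex.exp u - Complex.exp (-u))/2 = _
    rw [Complex.exp_neg, hexpu]
  have hsinhαuv : Complex.sinh ((α:ℂ)*u) = (E - E⁻¹)/2 := by
    show (Complex.exp ((α:ℂ)*u) - Complex.exp (-((α:ℂ)*u)))/2 = _
    rw [Complex.exp_neg, ← hEdef]
  have hS1 : Complex.sinh u = (2*z)/((1-z)*(1+z)) := by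
    rw [hsinhu, hwdef]
    field_simp
    ring
  have hS2 : Complex.sinh ((α:ℂ)*u) = (E^2-1)/(2*E) := by
    rw [hsinhαuv]
    field_simp
  have hderiv2 : deriv (lensMap α) z = 4*(α:ℂ)*E/((1+z)*(1-z)*(E+1)^2) := by
    rw [hd, hξ', hcpow, hcpow', hdW, hwdef]
    field_simp
    ring
  rw [hderiv2, hval, hS1, hS2]
  field_simp
  ring

theorem lens_starlike_half (α : ℝ) (hα : α ∈ Set.Ioc (0:ℝ) 1) :
    ∀ z ∈ Metric.ball (0:ℂ) 1, z ≠ 0 →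
      (z * deriv (lensMap α) z / lensMap α z).re ≥ α / Real.sin (α * π / 2) ∧
      (α < 1 → (z * deriv (lensMap α) z / lensMap α z).re > 1/2) := by
  obtain ⟨h0, h1⟩ := hα
  intro z hz hz0
  rw [Metric.mem_ball, dist_zero_right] at hz
  rcases eq_or_lt_of_le h1 with rfl|h1'
  · -- α = 1
    have hev : ∀ᶠ y in nhds z, lensMap 1 y = y := by
      filter_upwards [Metric.isOpen_ball.eventually_mem (Metric.mem_ball.2
        (by rwa [dist_zero_right]))] with y hy
      rw [Metric.mem_ball, dist_zero_right] at hy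
      have h1y : (1:ℂ) - y ≠ 0 := by
        intro h
        have : y = 1 := by linear_combination -h
        rw [this] at hy; simp at hy
      unfold lensMap
      rw [Complex.ofReal_one, Complex.cpow_one]
      have hden : (1+y)/(1-y) + 1 = 2/(1-y) := by field_simp; ring
      have hnum : (1+y)/(1-y) - 1 = 2*y/(1-y) := by field_simp; ring
      rw [hden, hnum]
      field_simp
    have hder : deriv (lensMap 1) z = 1 := by
      rw [Filter.EventuallyEq.deriv_eq hev]
      exact deriv_id z
    have hval : lensMap 1 z = z := hev.self_of_nhds
    rw [hder, hval, mul_one, div_self hz0]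
    constructor
    · rw [show (1:ℝ)*π/2 = π/2 by ring, Real.sin_pi_div_two]
      norm_num
    · intro h; exact absurd h (lt_irrefl 1)
  · -- α < 1
    have hπ := Real.pi_pos
    have hs0 : 0 < Real.sin (α*π/2) := by
      apply Real.sin_pos_of_pos_of_lt_pi (by positivity)
      nlinarith
    set u : ℂ := Complex.log ((1+z)/(1-z)) with hudef
    have hid := lens_deriv α h0 h1 z hz hz0
    -- |u.im| < π/2 and u ≠ 0 (re-derive)
    have h1z : (1:ℂ) - z ≠ 0 := by
      intro h
      have : z = 1 := by linear_combination -h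
      rw [this] at hz; simp at hz
    have h1z' : (1:ℂ) + z ≠ 0 := by
      intro h
      have : z = -1 := by linear_combination h
      rw [this] at hz; simp at hz
    have hw0 : (1+z)/(1-z) ≠ 0 := div_ne_zero h1z' h1z
    have hnsq : 0 < Complex.normSq (1-z) := Complex.normSq_pos.2 h1z
    have hzsq : z.re^2 + z.im^2 < 1 := by
      have h2 : ‖z‖^2 < 1 := by
        nlinarith [norm_nonneg z, hz]
      rw [Complex.sq_norm, Complex.normSq_apply] at h2
      nlinarith [h2]
    have hwre : 0 < ((1+z)/(1-z)).re := by
      rw [Complex.div_re, ← add_div]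
      apply div_pos _ hnsq
      simp only [Complex.add_re, Complex.add_im, Complex.sub_re, Complex.sub_im,
        Complex.one_re, Complex.one_im]
      nlinarith [hzsq]
    have him : |u.im| < π/2 := by
      rw [hudef, Complex.log_im]
      exact Complex.abs_arg_lt_pi_div_two_iff.2 (Or.inl hwre)
    have hune : u ≠ 0 := by
      intro h
      have hexpu : Complex.exp u = (1+z)/(1-z) := Complex.exp_log hw0
      rw [h, Complex.exp_zero] at hexpu
      have h2 : (1:ℂ)+z = 1-z := by
        field_simp at hexpu
        linear_combination -hexpu
      exact hz0 (by linear_combination h2/2)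
    have hstrip := strip_ineq α h0 h1' him hune
    have hre : (z * deriv (lensMap α) z / lensMap α z).re
        = α * (Complex.sinh u / Complex.sinh ((α:ℂ)*u)).re := by
      rw [hid, mul_div_assoc, Complex.re_ofReal_mul]
    have hmain : α / Real.sin (α*π/2) ≤ (z * deriv (lensMap α) z / lensMap α z).re := by
      rw [hre, div_eq_mul_one_div]
      exact mul_le_mul_of_nonneg_left hstrip h0.le
    constructor
    · exact hmain
    · intro _
      have hs2 : Real.sin (α*π/2) < 2*α := by
        have hle := Real.sin_le (by positivity : (0:ℝ) ≤ α*π/2)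
        have : π < 4 := by nlinarith [Real.pi_lt_d2]
        nlinarith
      have : (1:ℝ)/2 < α / Real.sin (α*π/2) := by
        rw [lt_div_iff₀ hs0]
        linarith
      calc (1:ℝ)/2 < α / Real.sin (α*π/2) := this
        _ ≤ _ := hmain
end
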